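/- arXiv:1811.01011 — 2 statements merged into one kernel-verified Lean document; each statement's English description precedes it below -/
import Mathlib

section
/- For an n-tuple of partitions λ = (λ¹,...,λⁿ) and a variable z of color i, the product Π_{□ ∈ λ, col □ = i} ζ(z/χ_□) · Π_{□ ∈ λ, col □ = i+1} ζ(z/χ_□) · (u_{i+1}/q - z q/u_{i+1}) equals the ratio of Π over inner corners □ of λ of color i+1 of (√χ_□/q - zq/√χ_□) divided by Π over outer corners □ of λ of color i of (√χ_□ - z/√χ_□). -/
/-!
Write `cornerFactor q z w = w q⁻¹ - z q w⁻¹`: it is the factor of an inner corner with `√χ = w`,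
while `cornerFactor q z (w q) = w - z w⁻¹` is the factor of an outer corner with `√χ = w`.
The `ζ`-factor of a box with `√χ = w` is `cornerFactor q z w / cornerFactor q z (w q)`, so the
product over a row of length `a` whose first box has `√χ = w` telescopes to
`cornerFactor q z w / cornerFactor q z (w qᵃ)`.

Row `y` (color `i`) and row `y + 1` (color `i + 1`) of the same partition carry the same weights
`√χ`, so their two telescoped products combine into (inner corner of row `y + 1`) / (outer corner
of row `y`) when `λ_{y+1} < λ_y`, and into `1` otherwise. What is left is row `0` of color `i + 1`,
which occurs only in the partition `k = i % n + 1`, where `√χ` of its first box is `u_{i+1}`;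
the factor `u_{i+1}/q - z q/u_{i+1} = cornerFactor q z u_{i+1}` turns its telescoped product into
its inner corner.
-/

namespace Statement8

variable {K : Type*} [Field K]

/-- The "square root of the weight" `√χ_□ = u_k q^x q̄^{(y+k-c)/n}` of the box
`□ = (x,y)` of the partition `λᵏ`, viewed as a variable of color `c ≡ y + k mod n`. -/
noncomputable def sqw (n : ℕ) (u : ℕ → K) (q qb : K) (k x y c : ℕ) : K :=
  u k * q ^ x * qb ^ (((y : ℤ) + (k : ℤ) - (c : ℤ)) / (n : ℤ))

open Finset

def cornerFactor (q z w : K) : K := w * q⁻¹ - z * q * w⁻¹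

lemma cornerFactor_mul_right {q : K} (z w : K) (hq : q ≠ 0) :
    cornerFactor q z (w * q) = w - z * w⁻¹ := by
  simp only [cornerFactor, mul_inv_cancel_right₀ hq]
  field_simp

lemma zeta_eq_cornerFactor_div {q w : K} (z : K) (hq : q ≠ 0) (hw : w ≠ 0) :
    (z * q - w ^ 2 * q⁻¹) / (z - w ^ 2) =
      cornerFactor q z w / cornerFactor q z (w * q) := by
  have hnum : cornerFactor q z w = -w⁻¹ * (z * q - w ^ 2 * q⁻¹) := by
    simp only [cornerFactor]; field_simp; ring
  have hden : cornerFactor q z (w * q) = -w⁻¹ * (z - w ^ 2) := by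
    rw [cornerFactor_mul_right z w hq]; field_simp; ring
  rw [hnum, hden, mul_div_mul_left _ _ (neg_ne_zero.2 (inv_ne_zero hw))]

lemma prod_range_div_succ {G₀ : Type*} [CommGroupWithZero G₀] {f : ℕ → G₀}
    (hf : ∀ x, f x ≠ 0) (a : ℕ) :
    ∏ x ∈ range a, f x / f (x + 1) = f 0 / f a := by
  induction a with
  | zero => simp [hf 0]
  | succ a ih => rw [prod_range_succ, ih, div_mul_div_cancel₀ (hf a)]

lemma eq_of_mod_eq_of_mem_Icc {n a b : ℕ} (ha : a ∈ Icc 1 n) (hb : b ∈ Icc 1 n)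
    (h : a % n = b % n) : a = b := by
  rw [mem_Icc] at ha hb
  wlog hab : a ≤ b generalizing a b
  · exact (this hb ha h.symm (le_of_not_ge hab)).symm
  have hdvd : n ∣ b - a := (Nat.modEq_iff_dvd' hab).1 h
  have hzero := Nat.eq_zero_of_dvd_of_lt hdvd (by omega)
  omega

lemma succ_add_mod_eq_iff (n y k i : ℕ) :
    (y + 1 + k) % n = (i + 1) % n ↔ (y + k) % n = i % n := by
  rw [Nat.add_right_comm]
  exact ⟨Nat.ModEq.add_right_cancel' 1, Nat.ModEq.add_right 1⟩

lemma prod_filter_product {α β M : Type*} [CommMonoid M] (s : Finset α) (t : Finset β)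
    (p : α × β → Prop) [DecidablePred p] (f : α × β → M) :
    ∏ x ∈ (s ×ˢ t).filter p, f x =
      ∏ a ∈ s, ∏ b ∈ t.filter (fun b => p (a, b)), f (a, b) := by
  simp_rw [prod_filter, prod_product]

lemma prod_filter_range_succ {M : Type*} [CommMonoid M] (p : ℕ → Prop) [DecidablePred p]
    (f : ℕ → M) (N : ℕ) :
    ∏ y ∈ (range (N + 1)).filter p, f y =
      (∏ y ∈ (range N).filter p, f y) * if p N then f N else 1 := by
  simp only [prod_filter]; exact prod_range_succ _ N

lemma prod_filter_range_succ' {M : Type*} [CommMonoid M] (p : ℕ → Prop) [DecidablePred p]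
    (f : ℕ → M) (N : ℕ) :
    ∏ y ∈ (range (N + 1)).filter p, f y =
      (∏ y ∈ (range N).filter (fun y => p (y + 1)), f (y + 1)) * if p 0 then f 0 else 1 := by
  simp only [prod_filter]; exact prod_range_succ' _ N

lemma prod_Icc_ite_mod_eq {M : Type*} [CommMonoid M] {n : ℕ} (hn : 0 < n) (i : ℕ)
    (f : ℕ → M) :
    ∏ k ∈ Icc 1 n, (if k % n = (i + 1) % n then f k else 1) = f (i % n + 1) := by
  have hmem : i % n + 1 ∈ Icc 1 n := mem_Icc.2 ⟨le_add_self, Nat.mod_lt i hn⟩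
  have hiff : ∀ k ∈ Icc 1 n, k % n = (i + 1) % n ↔ k = i % n + 1 := fun k hk =>
    ⟨fun h => eq_of_mod_eq_of_mem_Icc hk hmem (h.trans (Nat.mod_add_mod i n 1).symm),
      fun h => h ▸ Nat.mod_add_mod i n 1⟩
  rw [prod_congr rfl fun k hk => if_congr (hiff k hk) rfl rfl, prod_ite_eq', if_pos hmem]

section Weights

variable (n : ℕ) (u : ℕ → K) (q qb : K)

lemma sqw_succ_col (k x y j : ℕ) : sqw n u q qb k (x + 1) y j = sqw n u q qb k x y j * q := by
  simp only [sqw]; ring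

lemma sqw_succ_row_succ (k x y j : ℕ) :
    sqw n u q qb k x (y + 1) (j + 1) = sqw n u q qb k x y j := by
  simp only [sqw]; push_cast; ring_nf

lemma u_add_mul (hu : ∀ c, u (c + n) = u c * qb⁻¹) (c m : ℕ) :
    u (c + n * m) = u c * qb⁻¹ ^ m := by
  induction m with
  | zero => simp
  | succ m ih => rw [Nat.mul_succ, ← add_assoc, hu, ih, pow_succ, mul_assoc]

lemma sqw_mod_add_one (hn : 0 < n) (hu : ∀ c, u (c + n) = u c * qb⁻¹) (i : ℕ) :
    sqw n u q qb (i % n + 1) 0 0 (i + 1) = u (i + 1) := by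
  have hexp : (((0 : ℕ) : ℤ) + ((i % n + 1 : ℕ) : ℤ) - ((i + 1 : ℕ) : ℤ)) / (n : ℤ) =
      -((i / n : ℕ) : ℤ) := by
    have hdiv : ((i % n : ℕ) : ℤ) + n * ((i / n : ℕ) : ℤ) = i := by
      exact_mod_cast Nat.mod_add_div i n
    rw [show ((0 : ℕ) : ℤ) + ((i % n + 1 : ℕ) : ℤ) - ((i + 1 : ℕ) : ℤ) =
        n * -((i / n : ℕ) : ℤ) by push_cast at hdiv ⊢; linarith]
    exact Int.mul_ediv_cancel_left _ (by exact_mod_cast hn.ne')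
  rw [sqw, hexp, zpow_neg, zpow_natCast, ← inv_pow, pow_zero, mul_one,
    ← u_add_mul n u qb hu, Nat.add_right_comm, Nat.mod_add_div]

variable {n u q qb}

lemma sqw_ne_zero (hq : q ≠ 0) (hqb : qb ≠ 0) (hu0 : ∀ k, u k ≠ 0) (k x y j : ℕ) :
    sqw n u q qb k x y j ≠ 0 :=
  mul_ne_zero (mul_ne_zero (hu0 k) (pow_ne_zero _ hq)) (zpow_ne_zero _ hqb)

variable (z : K)

lemma cornerFactor_sqw_ne_zero (hq : q ≠ 0) (hqb : qb ≠ 0) (hu0 : ∀ k, u k ≠ 0)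
    (hgen : ∀ (k : ℕ) (s t : ℤ), (u k * q ^ s * qb ^ t) ^ 2 ≠ z) (k x y j : ℕ) :
    cornerFactor q z (sqw n u q qb k x y j) ≠ 0 := by
  intro h
  have hw : sqw n u q qb k x y j ≠ 0 := sqw_ne_zero hq hqb hu0 k x y j
  apply hgen k ((x : ℤ) - 1) (((y : ℤ) + (k : ℤ) - (j : ℤ)) / (n : ℤ))
  have hsq : (sqw n u q qb k x y j * q⁻¹) ^ 2 = z := by
    simp only [cornerFactor] at h
    field_simp at h ⊢
    linear_combination h
  rw [← hsq, sqw, zpow_sub₀ hq, zpow_natCast, zpow_one]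
  ring

variable {z}

lemma prod_row_zeta {k y j : ℕ} (hq : q ≠ 0) (hw : ∀ x, sqw n u q qb k x y j ≠ 0)
    (hf : ∀ x, cornerFactor q z (sqw n u q qb k x y j) ≠ 0) (a : ℕ) :
    ∏ x ∈ range a,
        (z * q - (sqw n u q qb k x y j) ^ 2 * q⁻¹) / (z - (sqw n u q qb k x y j) ^ 2) =
      cornerFactor q z (sqw n u q qb k 0 y j) / cornerFactor q z (sqw n u q qb k a y j) := by
  simp_rw [zeta_eq_cornerFactor_div z hq (hw _), ← sqw_succ_col]
  exact prod_range_div_succ hf a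

lemma prod_row_zeta_inv {k y j : ℕ} (hq : q ≠ 0) (hw : ∀ x, sqw n u q qb k x y j ≠ 0)
    (hf : ∀ x, cornerFactor q z (sqw n u q qb k x y j) ≠ 0) (a : ℕ) :
    ∏ x ∈ range a,
        (z - (sqw n u q qb k x y j) ^ 2) / (z * q - (sqw n u q qb k x y j) ^ 2 * q⁻¹) =
      cornerFactor q z (sqw n u q qb k a y j) / cornerFactor q z (sqw n u q qb k 0 y j) := by
  rw [← inv_div, ← prod_row_zeta hq hw hf, ← prod_inv_distrib]
  simp only [inv_div]

lemma prod_rows_zeta {k : ℕ} (hq : q ≠ 0) (hw : ∀ x y j, sqw n u q qb k x y j ≠ 0)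
    (hf : ∀ x y j, cornerFactor q z (sqw n u q qb k x y j) ≠ 0) {lam : ℕ → ℕ} {N : ℕ}
    (hvan : lam N = 0) (i : ℕ) :
    (∏ y ∈ (range (N + 1)).filter (fun y => (y + k) % n = i % n),
        ∏ x ∈ range (lam y),
          (z * q - (sqw n u q qb k x y i) ^ 2 * q⁻¹) / (z - (sqw n u q qb k x y i) ^ 2)) *
      (∏ y ∈ (range (N + 1)).filter (fun y => (y + k) % n = (i + 1) % n),
        ∏ x ∈ range (lam y),
          (z - (sqw n u q qb k x y (i + 1)) ^ 2) /
            (z * q - (sqw n u q qb k x y (i + 1)) ^ 2 * q⁻¹)) =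
    (∏ y ∈ (range N).filter (fun y => (y + k) % n = i % n),
        cornerFactor q z (sqw n u q qb k (lam (y + 1)) y i) /
          cornerFactor q z (sqw n u q qb k (lam y) y i)) *
      if k % n = (i + 1) % n then
        cornerFactor q z (sqw n u q qb k (lam 0) 0 (i + 1)) /
          cornerFactor q z (sqw n u q qb k 0 0 (i + 1))
      else 1 := by
  rw [prod_filter_range_succ, prod_filter_range_succ', hvan, prod_range_zero, ite_self, mul_one]
  simp only [succ_add_mod_eq_iff, sqw_succ_row_succ, zero_add]
  rw [← mul_assoc, ← prod_mul_distrib, prod_row_zeta_inv hq (hw · 0 _) (hf · 0 _)]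
  congr 1
  refine prod_congr rfl fun y _ => ?_
  rw [prod_row_zeta hq (hw · y i) (hf · y i), prod_row_zeta_inv hq (hw · y i) (hf · y i),
    div_mul_div_cancel₀' (hf 0 y i)]

lemma prod_corners_div {k : ℕ} (hq : q ≠ 0)
    (hf : ∀ x y j, cornerFactor q z (sqw n u q qb k x y j) ≠ 0) {lam : ℕ → ℕ} {N : ℕ}
    (hpart : ∀ y, lam (y + 1) ≤ lam y) (hvan : lam N = 0) (i : ℕ) :
    (∏ y ∈ (range (N + 1)).filter
        (fun y => (y + k) % n = (i + 1) % n ∧ (y = 0 ∨ lam y < lam (y - 1))),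
        cornerFactor q z (sqw n u q qb k (lam y) y (i + 1))) /
      ∏ y ∈ (range (N + 1)).filter (fun y => (y + k) % n = i % n ∧ lam (y + 1) < lam y),
        (sqw n u q qb k (lam y - 1) y i - z * (sqw n u q qb k (lam y - 1) y i)⁻¹) =
    (∏ y ∈ (range N).filter (fun y => (y + k) % n = i % n),
        cornerFactor q z (sqw n u q qb k (lam (y + 1)) y i) /
          cornerFactor q z (sqw n u q qb k (lam y) y i)) *
      if k % n = (i + 1) % n then cornerFactor q z (sqw n u q qb k (lam 0) 0 (i + 1)) else 1 := by
  have houter :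
      ∀ y ∈ (range (N + 1)).filter (fun y => (y + k) % n = i % n ∧ lam (y + 1) < lam y),
      sqw n u q qb k (lam y - 1) y i - z * (sqw n u q qb k (lam y - 1) y i)⁻¹ =
        cornerFactor q z (sqw n u q qb k (lam y) y i) := by
    intro y hy
    obtain ⟨m, hm⟩ : ∃ m, lam y = m + 1 :=
      Nat.exists_eq_add_one_of_ne_zero (by rw [mem_filter] at hy; omega)
    rw [hm, Nat.add_sub_cancel, sqw_succ_col, cornerFactor_mul_right z _ hq]
  rw [prod_congr rfl houter, prod_filter_range_succ', prod_filter_range_succ]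
  simp only [succ_add_mod_eq_iff, sqw_succ_row_succ, zero_add, Nat.add_one_ne_zero,
    Nat.add_sub_cancel, true_or, and_true, false_or, hvan, Nat.not_lt_zero, and_false,
    if_false, mul_one]
  rw [mul_div_right_comm, ← prod_div_distrib, ← filter_filter, prod_filter_of_ne]
  intro y _ hne
  by_contra hlt
  rw [le_antisymm (hpart y) (not_lt.1 hlt), div_self (hf _ y i)] at hne
  exact hne rfl

end Weights

theorem statement8_general (n N : ℕ) (hn : 0 < n) (i : ℕ)
    (u : ℕ → K) (q qb z : K)
    (hu : ∀ c, u (c + n) = u c * qb⁻¹)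
    (hu0 : ∀ k, u k ≠ 0) (hq : q ≠ 0) (hqb : qb ≠ 0)
    (hgen : ∀ (k : ℕ) (s t : ℤ), (u k * q ^ s * qb ^ t) ^ 2 ≠ z)
    (lam : ℕ → ℕ → ℕ)
    (hpart : ∀ k y, lam k (y + 1) ≤ lam k y)
    (hvan : ∀ k y, N ≤ y → lam k y = 0) :
    (∏ k ∈ Finset.Icc 1 n,
        ∏ y ∈ (Finset.range (N + 1)).filter (fun y => (y + k) % n = i % n),
          ∏ x ∈ Finset.range (lam k y),
            (z * q - (sqw n u q qb k x y i) ^ 2 * q⁻¹) / (z - (sqw n u q qb k x y i) ^ 2)) *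
      (∏ k ∈ Finset.Icc 1 n,
        ∏ y ∈ (Finset.range (N + 1)).filter (fun y => (y + k) % n = (i + 1) % n),
          ∏ x ∈ Finset.range (lam k y),
            (z - (sqw n u q qb k x y (i + 1)) ^ 2) /
              (z * q - (sqw n u q qb k x y (i + 1)) ^ 2 * q⁻¹)) *
      (u (i + 1) * q⁻¹ - z * q * (u (i + 1))⁻¹) =
    (∏ p ∈ ((Finset.Icc 1 n) ×ˢ Finset.range (N + 1)).filter
        (fun p => (p.2 + p.1) % n = (i + 1) % n ∧
          (p.2 = 0 ∨ lam p.1 p.2 < lam p.1 (p.2 - 1))),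
        (sqw n u q qb p.1 (lam p.1 p.2) p.2 (i + 1) * q⁻¹ -
          z * q * (sqw n u q qb p.1 (lam p.1 p.2) p.2 (i + 1))⁻¹)) /
    (∏ p ∈ ((Finset.Icc 1 n) ×ˢ Finset.range (N + 1)).filter
        (fun p => (p.2 + p.1) % n = i % n ∧ lam p.1 (p.2 + 1) < lam p.1 p.2),
        (sqw n u q qb p.1 (lam p.1 p.2 - 1) p.2 i -
          z * (sqw n u q qb p.1 (lam p.1 p.2 - 1) p.2 i)⁻¹)) := by
  have hf : ∀ k x y j, cornerFactor q z (sqw n u q qb k x y j) ≠ 0 :=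
    cornerFactor_sqw_ne_zero z hq hqb hu0 hgen
  have hτ : u (i + 1) * q⁻¹ - z * q * (u (i + 1))⁻¹ = ∏ k ∈ Icc 1 n,
      if k % n = (i + 1) % n then cornerFactor q z (sqw n u q qb k 0 0 (i + 1)) else 1 := by
    rw [prod_Icc_ite_mod_eq hn, sqw_mod_add_one n u q qb hn hu, cornerFactor]
  rw [hτ, prod_filter_product, prod_filter_product, ← prod_mul_distrib, ← prod_mul_distrib,
    ← prod_div_distrib]
  refine prod_congr rfl fun k _ =>
    .trans ?_ (prod_corners_div hq (hf k) (hpart k) (hvan k N le_rfl) i).symm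
  rw [prod_rows_zeta hq (sqw_ne_zero hq hqb hu0 k) (hf k) (hvan k N le_rfl), mul_assoc]
  congr 1
  split_ifs
  · exact div_mul_cancel₀ _ (hf k 0 0 (i + 1))
  · exact one_mul 1

/-- for an `n`-tuple of partitions `λ = (λ¹,…,λⁿ)` and a variable `z` of
color `i`, the product `ζ(z/χ_λ) τ₊(z)`, i.e.
`∏_{col □ ≡ i} (zq - χ_□ q⁻¹)/(z - χ_□) · ∏_{col □ ≡ i+1} (z - χ_□)/(zq - χ_□ q⁻¹)
  · (u_{i+1}/q - zq/u_{i+1})`,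
equals the ratio of the product over inner corners of `λ` of color `i+1` of
`(√χ_□/q - zq/√χ_□)` by the product over outer corners of `λ` of color `i` of
`(√χ_□ - z/√χ_□)`. -/
theorem statement8 (n N : ℕ) (hn : 0 < n) (i : ℕ) (hi1 : 1 ≤ i) (hin : i ≤ n)
    (u : ℕ → K) (q qb z : K)
    (hu : ∀ c, u (c + n) = u c * qb⁻¹)
    (hu0 : ∀ k, u k ≠ 0) (hq : q ≠ 0) (hqb : qb ≠ 0)
    (hgen : ∀ (k : ℕ) (s t : ℤ), (u k * q ^ s * qb ^ t) ^ 2 ≠ z)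
    (lam : ℕ → ℕ → ℕ)
    (hpart : ∀ k y, lam k (y + 1) ≤ lam k y)
    (hvan : ∀ k y, N ≤ y → lam k y = 0) :
    (∏ k ∈ Finset.Icc 1 n,
        ∏ y ∈ (Finset.range (N + 1)).filter (fun y => (y + k) % n = i % n),
          ∏ x ∈ Finset.range (lam k y),
            (z * q - (sqw n u q qb k x y i) ^ 2 * q⁻¹) / (z - (sqw n u q qb k x y i) ^ 2)) *
      (∏ k ∈ Finset.Icc 1 n,
        ∏ y ∈ (Finset.range (N + 1)).filter (fun y => (y + k) % n = (i + 1) % n),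
          ∏ x ∈ Finset.range (lam k y),
            (z - (sqw n u q qb k x y (i + 1)) ^ 2) /
              (z * q - (sqw n u q qb k x y (i + 1)) ^ 2 * q⁻¹)) *
      (u (i + 1) * q⁻¹ - z * q * (u (i + 1))⁻¹) =
    (∏ p ∈ ((Finset.Icc 1 n) ×ˢ Finset.range (N + 1)).filter
        (fun p => (p.2 + p.1) % n = (i + 1) % n ∧
          (p.2 = 0 ∨ lam p.1 p.2 < lam p.1 (p.2 - 1))),
        (sqw n u q qb p.1 (lam p.1 p.2) p.2 (i + 1) * q⁻¹ -
          z * q * (sqw n u q qb p.1 (lam p.1 p.2) p.2 (i + 1))⁻¹)) /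
    (∏ p ∈ ((Finset.Icc 1 n) ×ˢ Finset.range (N + 1)).filter
        (fun p => (p.2 + p.1) % n = i % n ∧ lam p.1 (p.2 + 1) < lam p.1 p.2),
        (sqw n u q qb p.1 (lam p.1 p.2 - 1) p.2 i -
          z * (sqw n u q qb p.1 (lam p.1 p.2 - 1) p.2 i)⁻¹)) :=
  statement8_general n N hn i u q qb z hu hu0 hq hqb hgen lam hpart hvan

end Statement8
end

section
/- The fixed points of the ℤ/nℤ-action on stable ADHM quadruples are exactly the chainsaw quiver data: a stable quadruple (X, Y, A, B) on V = ⊕_λ V(λ) (generalized eigenspaces of the intertwining g ∈ GL(V)) satisfying g X g⁻¹ = X, g Y g⁻¹ = e^{2πi/n} Y, g A = A δ, B g⁻¹ = e^{2πi/n} δ⁻¹ B has all non-zero eigenspaces among V_k = V(e^{2πik/n}), and the maps decompose as X_k : V_k → V_k, Y_k : V_{k-1} → V_k, A_k : ℂw_k → V_k, B_k : V_{k-1} → ℂw_k. -/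
/-!
Twisted commutation with `g` moves generalized eigenspaces: if `g T = c T g` then `T` maps
`V(μ)` into `V(cμ)`. So `X` preserves each `V(μ)`, `Y` sends `V(μ)` to `V(ωμ)`, `A e_k` is an
eigenvector with eigenvalue `ω^(k+1)`, and the `j`-th coordinate of `B` is an eigenfunctional of
`g` with eigenvalue `ω^j`, hence vanishes on `V(μ)` for `μ ≠ ω^j`. Consequently the sum of the
`V(μ)` over the `n`-th roots of unity contains `Im A` and is `X`- and `Y`-stable, so by stability
it is all of `V`; independence of generalized eigenspaces then forces every other `V(μ)` to be `0`.
-/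

noncomputable def maxGenEig {V : Type*} [AddCommGroup V] [Module ℂ V]
    (G : Module.End ℂ V) (μ : ℂ) : Submodule ℂ V :=
  ⨆ k : ℕ, LinearMap.ker ((G - μ • (1 : Module.End ℂ V)) ^ k)

open Module End

lemma maxGenEig_eq_maxGenEigenspace {V : Type*} [AddCommGroup V] [Module ℂ V]
    (G : End ℂ V) (μ : ℂ) : maxGenEig G μ = G.maxGenEigenspace μ := by
  rw [← iSup_genEigenspace_eq]
  simp_rw [genEigenspace_nat]
  rfl

theorem IsPrimitiveRoot.eq_add_one_of_pow_eq {R : Type*} [CommMonoid R] {ω : R} {n : ℕ}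
    [NeZero n] (hω : IsPrimitiveRoot ω n) {j k : Fin n} (h : ω ^ (j : ℕ) = ω ^ ((k : ℕ) + 1)) :
    j = k + 1 := by
  rw [(hω.isOfFinOrder (NeZero.ne n)).pow_inj_mod, ← hω.eq_orderOf] at h
  ext
  rw [Fin.val_add, Fin.val_one', Nat.add_mod_mod, ← h, Nat.mod_eq_of_lt j.isLt]

section CommRing

variable {R V W : Type*} [CommRing R] [AddCommGroup V] [Module R V] [AddCommGroup W] [Module R W]

lemma pow_sub_smul_comp_of_comp_eq_smul {f : End R V} {g : End R W} {T : V →ₗ[R] W} {c : R}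
    (h : g ∘ₗ T = c • (T ∘ₗ f)) (μ : R) (m : ℕ) :
    ((g - (c * μ) • 1) ^ m) ∘ₗ T = c ^ m • (T ∘ₗ (f - μ • 1) ^ m) := by
  have h1 : (g - (c * μ) • 1) ∘ₗ T = c • (T ∘ₗ (f - μ • 1)) := by
    rw [LinearMap.sub_comp, h, LinearMap.comp_sub, smul_sub]
    ext v; simp [mul_smul]
  induction m with
  | zero => rw [pow_zero, pow_zero, pow_zero, one_smul]; rfl
  | succ m ih =>
    rw [pow_succ, Module.End.mul_eq_comp, LinearMap.comp_assoc, h1, LinearMap.comp_smul,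
      ← LinearMap.comp_assoc, ih, LinearMap.smul_comp, LinearMap.comp_assoc, smul_smul,
      ← pow_succ', ← Module.End.mul_eq_comp, ← pow_succ]

lemma mapsTo_maxGenEigenspace_of_comp_eq_smul {f : End R V} {g : End R W} {T : V →ₗ[R] W}
    {c : R} (h : g ∘ₗ T = c • (T ∘ₗ f)) (μ : R) :
    Set.MapsTo T (f.maxGenEigenspace μ) (g.maxGenEigenspace (c * μ)) := by
  intro v hv
  obtain ⟨m, hm⟩ := (mem_maxGenEigenspace f μ v).1 hv
  refine (mem_maxGenEigenspace g _ _).2 ⟨m, ?_⟩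
  rw [← LinearMap.comp_apply, pow_sub_smul_comp_of_comp_eq_smul h, LinearMap.smul_apply,
    LinearMap.comp_apply, hm, map_zero, smul_zero]

lemma map_iSup_maxGenEigenspace_le {f T : End R V} {c : R} (h : f ∘ₗ T = c • (T ∘ₗ f))
    {S : Set R} (hS : ∀ μ ∈ S, c * μ ∈ S) :
    (⨆ μ ∈ S, f.maxGenEigenspace μ).map T ≤ ⨆ μ ∈ S, f.maxGenEigenspace μ := by
  simp_rw [Submodule.map_iSup]
  refine iSup₂_le fun μ hμ => ?_
  exact (Submodule.map_le_iff_le_comap.2 (mapsTo_maxGenEigenspace_of_comp_eq_smul h μ)).trans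
    (le_biSup (fun ν => f.maxGenEigenspace ν) (hS μ hμ))

lemma apply_single_mem_eigenspace {ι : Type*} [DecidableEq ι] {f : End R V}
    {A : (ι → R) →ₗ[R] V} {d : ι → R} (h : ∀ w, f (A w) = A (fun i => d i * w i)) (i : ι) :
    A (Pi.single i 1) ∈ f.eigenspace (d i) := by
  have hd : (fun j => d j * (Pi.single i 1 : ι → R) j) = d i • (Pi.single i 1 : ι → R) := by
    funext j; rcases eq_or_ne j i with rfl | hj <;> simp [*]
  rw [mem_eigenspace_iff, ← map_smul, ← hd]
  exact h _

lemma range_le_of_forall_single_mem {ι M : Type*} [AddCommGroup M] [Module R M] [Finite ι]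
    [DecidableEq ι] (A : (ι → R) →ₗ[R] M) {p : Submodule R M}
    (h : ∀ i, A (Pi.single i 1) ∈ p) : LinearMap.range A ≤ p := by
  rw [LinearMap.range_eq_map, ← (Pi.basisFun R ι).span_eq, Submodule.map_span_le]
  rintro _ ⟨i, rfl⟩
  simpa using h i

end CommRing

section Field

variable {K V W : Type*} [Field K] [AddCommGroup V] [Module K V] [AddCommGroup W] [Module K W]

lemma maxGenEigenspace_smul_one_eq_bot {a μ : K} (h : a ≠ μ) :
    (a • 1 : End K W).maxGenEigenspace μ = ⊥ := by
  refine (Submodule.eq_bot_iff _).2 fun v hv => ?_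
  obtain ⟨m, hm⟩ := (mem_maxGenEigenspace _ μ v).1 hv
  rw [← sub_smul, smul_pow, one_pow, LinearMap.smul_apply, Module.End.one_apply,
    smul_eq_zero] at hm
  exact hm.resolve_left (pow_ne_zero m (sub_ne_zero.2 h))

lemma apply_eq_zero_of_mem_maxGenEigenspace {f : End K V} {φ : V →ₗ[K] W} {a μ : K}
    (hφ : φ ∘ₗ f = a • φ) (h : a ≠ μ) {v : V} (hv : v ∈ f.maxGenEigenspace μ) : φ v = 0 := by
  have hcomp : (a • 1 : End K W) ∘ₗ φ = (1 : K) • (φ ∘ₗ f) := by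
    rw [one_smul, hφ, LinearMap.smul_comp]; rfl
  have := mapsTo_maxGenEigenspace_of_comp_eq_smul hcomp μ hv
  rwa [one_mul, SetLike.mem_coe, maxGenEigenspace_smul_one_eq_bot h, Submodule.mem_bot] at this

lemma maxGenEigenspace_eq_bot_of_iSup_eq_top {f : End K V} {S : Set K}
    (hS : ⨆ μ ∈ S, f.maxGenEigenspace μ = ⊤) {μ : K} (hμ : μ ∉ S) :
    f.maxGenEigenspace μ = ⊥ :=
  disjoint_top.1 (hS ▸ f.independent_maxGenEigenspace.disjoint_biSup hμ)

end Field

theorem statement18_general {V : Type*} [AddCommGroup V] [Module ℂ V]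
    (n : ℕ) [NeZero n] (ω : ℂ) (hω : IsPrimitiveRoot ω n)
    (X Y : Module.End ℂ V) (A : (Fin n → ℂ) →ₗ[ℂ] V) (B : V →ₗ[ℂ] (Fin n → ℂ))
    (g : V ≃ₗ[ℂ] V)
    (hstab : ∀ U : Submodule ℂ V, LinearMap.range A ≤ U →
      (∀ v ∈ U, X v ∈ U) → (∀ v ∈ U, Y v ∈ U) → U = ⊤)
    (hgX : ∀ v, g (X v) = X (g v))
    (hgY : ∀ v, g (Y v) = ω • Y (g v))
    (hgA : ∀ w : Fin n → ℂ, g (A w) = A (fun kk => ω ^ ((kk : ℕ) + 1) * w kk))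
    (hgB : ∀ v : V, ∀ kk : Fin n, ω ^ ((kk : ℕ) + 1) * B v kk = ω * B (g v) kk) :
    (∀ μ : ℂ, maxGenEig (g : V →ₗ[ℂ] V) μ ≠ ⊥ → μ ^ n = 1) ∧
    (∀ μ : ℂ, ∀ v ∈ maxGenEig (g : V →ₗ[ℂ] V) μ, X v ∈ maxGenEig (g : V →ₗ[ℂ] V) μ) ∧
    (∀ μ : ℂ, ∀ v ∈ maxGenEig (g : V →ₗ[ℂ] V) μ, Y v ∈ maxGenEig (g : V →ₗ[ℂ] V) (ω * μ)) ∧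
    (∀ kk : Fin n, A (Pi.single kk 1) ∈ maxGenEig (g : V →ₗ[ℂ] V) (ω ^ ((kk : ℕ) + 1))) ∧
    (∀ kk : Fin n, ∀ v ∈ maxGenEig (g : V →ₗ[ℂ] V) (ω ^ ((kk : ℕ) + 1)),
      ∀ jj : Fin n, jj ≠ kk + 1 → B v jj = 0) := by
  set G : End ℂ V := (g : V →ₗ[ℂ] V)
  simp only [maxGenEig_eq_maxGenEigenspace]
  have hX : G ∘ₗ X = (1 : ℂ) • (X ∘ₗ G) := LinearMap.ext fun v => by simp [G, hgX]
  have hY : G ∘ₗ Y = ω • (Y ∘ₗ G) := LinearMap.ext fun v => by simp [G, hgY]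
  have hA (k : Fin n) : A (Pi.single k 1) ∈ G.maxGenEigenspace (ω ^ ((k : ℕ) + 1)) :=
    eigenspace_le_maxGenEigenspace (apply_single_mem_eigenspace hgA k)
  have hB (j : Fin n) : LinearMap.proj j ∘ₗ B ∘ₗ G = ω ^ (j : ℕ) • (LinearMap.proj j ∘ₗ B) := by
    refine LinearMap.ext fun v => mul_left_cancel₀ (hω.ne_zero (NeZero.ne n)) ?_
    change ω * B (g v) j = ω * (ω ^ (j : ℕ) * B v j)
    rw [← hgB v j]; ring
  refine ⟨fun μ hμ => ?_,
    fun μ v hv => by simpa using mapsTo_maxGenEigenspace_of_comp_eq_smul hX μ hv,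
    fun μ v hv => mapsTo_maxGenEigenspace_of_comp_eq_smul hY μ hv, hA,
    fun k v hv j hj => (apply_eq_zero_of_mem_maxGenEigenspace (hB j)
      (fun h => hj (hω.eq_add_one_of_pow_eq h)) hv : (LinearMap.proj j ∘ₗ B) v = 0)⟩
  by_contra hμn
  have htop : ⨆ ν ∈ {ν : ℂ | ν ^ n = 1}, G.maxGenEigenspace ν = ⊤ := by
    refine hstab _ (range_le_of_forall_single_mem A fun k => ?_) (fun v hv => ?_) (fun v hv => ?_)
    · refine le_biSup (fun ν => G.maxGenEigenspace ν) ?_ (hA k)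
      rw [Set.mem_ofPred_eq, ← pow_mul, mul_comm, pow_mul, hω.pow_eq_one, one_pow]
    · exact map_iSup_maxGenEigenspace_le hX (fun ν hν => by simpa using hν) ⟨v, hv, rfl⟩
    · refine map_iSup_maxGenEigenspace_le hY (fun ν hν => ?_) ⟨v, hv, rfl⟩
      rw [Set.mem_ofPred_eq, mul_pow, hω.pow_eq_one, hν, one_mul]
  exact hμ (maxGenEigenspace_eq_bot_of_iSup_eq_top htop hμn)

/-- a stable ADHM quadruple `(X,Y,A,B)` fixed by the `ℤ/nℤ`-action via an
intertwiner `g ∈ GL(V)` (so `gXg⁻¹ = X`, `gYg⁻¹ = ωY`, `gA = Aδ`, `Bg⁻¹ = ωδ⁻¹B`, with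
`ω = e^{2πi/n}` and `δ = diag(ω, …, ωⁿ)`) is exactly a chainsaw quiver datum: all nonzero
generalized eigenspaces of `g` have eigenvalue an `n`-th root of unity `ω^k`, `X` preserves
each `V(μ)`, `Y` maps `V(μ)` to `V(ωμ)`, `A` maps `w_k` into `V(ω^k)`, and `B` maps
`V(ω^k)` into `ℂ w_{k+1}`. -/
theorem statement18 {V : Type*} [AddCommGroup V] [Module ℂ V] [FiniteDimensional ℂ V]
    (n : ℕ) [NeZero n] (ω : ℂ) (hω : IsPrimitiveRoot ω n)
    (X Y : Module.End ℂ V) (A : (Fin n → ℂ) →ₗ[ℂ] V) (B : V →ₗ[ℂ] (Fin n → ℂ))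
    (g : V ≃ₗ[ℂ] V)
    (hmoment : X ∘ₗ Y - Y ∘ₗ X + A ∘ₗ B = 0)
    (hstab : ∀ U : Submodule ℂ V, LinearMap.range A ≤ U →
      (∀ v ∈ U, X v ∈ U) → (∀ v ∈ U, Y v ∈ U) → U = ⊤)
    (hgX : ∀ v, g (X v) = X (g v))
    (hgY : ∀ v, g (Y v) = ω • Y (g v))
    (hgA : ∀ w : Fin n → ℂ, g (A w) = A (fun kk => ω ^ ((kk : ℕ) + 1) * w kk))
    (hgB : ∀ v : V, ∀ kk : Fin n, ω ^ ((kk : ℕ) + 1) * B v kk = ω * B (g v) kk) :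
    (∀ μ : ℂ, maxGenEig (g : V →ₗ[ℂ] V) μ ≠ ⊥ → μ ^ n = 1) ∧
    (∀ μ : ℂ, ∀ v ∈ maxGenEig (g : V →ₗ[ℂ] V) μ, X v ∈ maxGenEig (g : V →ₗ[ℂ] V) μ) ∧
    (∀ μ : ℂ, ∀ v ∈ maxGenEig (g : V →ₗ[ℂ] V) μ, Y v ∈ maxGenEig (g : V →ₗ[ℂ] V) (ω * μ)) ∧
    (∀ kk : Fin n, A (Pi.single kk 1) ∈ maxGenEig (g : V →ₗ[ℂ] V) (ω ^ ((kk : ℕ) + 1))) ∧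
    (∀ kk : Fin n, ∀ v ∈ maxGenEig (g : V →ₗ[ℂ] V) (ω ^ ((kk : ℕ) + 1)),
      ∀ jj : Fin n, jj ≠ kk + 1 → B v jj = 0) :=
  statement18_general n ω hω X Y A B g hstab hgX hgY hgA hgB
end
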